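/- arXiv:math/0209241 — 10 statements merged into one kernel-verified Lean document; each statement's English description precedes it below -/
import Mathlib

section
/- Let $K$ be a field of characteristic $p > 0$ and $R = K[U,V,Y,Z]/(UV, UZ, Z(V-Y^2))$. Let $I = (y^2(u^2 - z^4))R$, where lowercase letters denote images of the variables. Then $(y^3z^4)^p \in I^{[p]}$, the ideal generated by the $p$-th powers of the generators of $I$. -/
open MvPolynomial

/-- Let `K` be a field of characteristic `p > 0` and
`R = K[U,V,Y,Z]/(UV, UZ, Z(V-Y²))`.  Let `I = (y²(u²-z⁴))R`, where lowercase
letters denote images of the variables.  Then `(y³z⁴)^p ∈ I^{[p]}`, the ideal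
generated by the `p`-th powers of the generators of `I`. -/
theorem frobenius_power_membership (K : Type) [Field K] (p : ℕ) [Fact p.Prime]
    [CharP K p]
    (U V Y Z : MvPolynomial (Fin 4) K)
    (hU : U = X 0) (hV : V = X 1) (hY : Y = X 2) (hZ : Z = X 3)
    (π : MvPolynomial (Fin 4) K →+*
      (MvPolynomial (Fin 4) K ⧸ Ideal.span {U * V, U * Z, Z * (V - Y ^ 2)}))
    (hπ : π = Ideal.Quotient.mk (Ideal.span {U * V, U * Z, Z * (V - Y ^ 2)})) :
    (π (Y ^ 3 * Z ^ 4)) ^ p ∈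
      Ideal.span {(π (Y ^ 2 * (U ^ 2 - Z ^ 4))) ^ p} := by
  set I : Ideal (MvPolynomial (Fin 4) K) := Ideal.span {U * V, U * Z, Z * (V - Y ^ 2)} with hI
  haveI : CharP (MvPolynomial (Fin 4) K ⧸ I) p := by
    apply CharP.quotient'
    intro x hx
    have h0 : aeval (fun _ : Fin 4 => (0 : K)) ((x : MvPolynomial (Fin 4) K)) = 0 := by
      have : I ≤ RingHom.ker (aeval (fun _ : Fin 4 => (0 : K))).toRingHom := by
        rw [hI, Ideal.span_le]
        intro f hf
        simp only [Set.mem_insert_iff, Set.mem_singleton_iff] at hf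
        rcases hf with rfl | rfl | rfl <;>
          simp [RingHom.mem_ker, hU, hV, hY, hZ]
      exact this hx
    rw [map_natCast] at h0
    have : p ∣ x := (CharP.cast_eq_zero_iff K p x).mp h0
    exact (CharP.cast_eq_zero_iff (MvPolynomial (Fin 4) K) p x).mpr this
  obtain ⟨n, rfl⟩ : ∃ n, p = n + 2 := ⟨p - 2, by have := (Fact.out : (p).Prime).two_le; omega⟩
  subst hπ
  have h1 : (Ideal.Quotient.mk I) (U * V) = 0 :=
    Ideal.Quotient.eq_zero_iff_mem.mpr (Ideal.subset_span (by simp))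
  have h2 : (Ideal.Quotient.mk I) (U * Z) = 0 :=
    Ideal.Quotient.eq_zero_iff_mem.mpr (Ideal.subset_span (by simp))
  have h3 : (Ideal.Quotient.mk I) (Z * (V - Y ^ 2)) = 0 :=
    Ideal.Quotient.eq_zero_iff_mem.mpr (Ideal.subset_span (by simp))
  set π := Ideal.Quotient.mk I
  rw [Ideal.mem_span_singleton']
  refine ⟨-(π Y ^ n * π V), ?_⟩
  have e1 : (π (Y ^ 2 * (U ^ 2 - Z ^ 4))) ^ (n + 2)
      = π Y ^ (2 * (n + 2)) * (π U ^ (2 * (n + 2)) - π Z ^ (4 * (n + 2))) := by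
    rw [map_mul, mul_pow, map_sub, map_pow, map_pow, map_pow, sub_pow_char,
      ← pow_mul, ← pow_mul, ← pow_mul]

  rw [e1]
  simp only [map_mul, map_pow, map_sub] at h1 h2 h3 ⊢
  linear_combination (-(π Y ^ n) * π Y ^ (2 * (n + 2)) * π U ^ (2 * n + 3)) * h1
    + (π Y ^ n * π Y ^ (2 * (n + 2)) * π Z ^ (4 * n + 7)) * h3
end

section
/- Let $K$ be a field and $R = K[U,V,Y,Z]/(UV, UZ, Z(V-Y^2))$. Then $y^3z^4 \notin (y^2(u^2-z^4))R$, where lowercase letters denote the images of the variables. -/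
open MvPolynomial

noncomputable section NotInIdealAux

/-- exponent helper -/
def ee (i : Fin 4) (n : ℕ) : Fin 4 →₀ ℕ := Finsupp.single i n

def expA : Fin 4 →₀ ℕ := ee 2 3 + ee 3 4
def expB : Fin 4 →₀ ℕ := ee 1 1 + ee 2 1 + ee 3 4
def expC : Fin 4 →₀ ℕ := ee 0 2 + ee 2 3

variable (K : Type) [Field K]

/-- the key linear functional -/
def lam (p : MvPolynomial (Fin 4) K) : K :=
  coeff expA p + coeff expB p + coeff expC p

lemma lam_add (p q : MvPolynomial (Fin 4) K) : lam K (p + q) = lam K p + lam K q := by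
  simp [lam, coeff_add]; ring

lemma hX (i : Fin 4) (n : ℕ) : (X i : MvPolynomial (Fin 4) K) ^ n = monomial (ee i n) 1 :=
  X_pow_eq_monomial

lemma hX1 (i : Fin 4) : (X i : MvPolynomial (Fin 4) K) = monomial (ee i 1) 1 := by
  rw [← pow_one (X i), hX]

lemma coeffmul (q : MvPolynomial (Fin 4) K) (e m : Fin 4 →₀ ℕ) :
    coeff m (q * monomial e 1) = if e ≤ m then coeff (m - e) q else 0 := by
  simpa using coeff_mul_monomial' m e 1 q

-- non-divisibility facts
lemma nle0A : ¬ (ee 0 1 + ee 1 1 ≤ expA) := by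
  intro h; have := Finsupp.le_def.mp h 0; simp [ee, expA, Finsupp.single_apply] at this
lemma nle0B : ¬ (ee 0 1 + ee 1 1 ≤ expB) := by
  intro h; have := Finsupp.le_def.mp h 0; simp [ee, expB, Finsupp.single_apply] at this
lemma nle0C : ¬ (ee 0 1 + ee 1 1 ≤ expC) := by
  intro h; have := Finsupp.le_def.mp h 1; simp [ee, expC, Finsupp.single_apply] at this
lemma nle1A : ¬ (ee 0 1 + ee 3 1 ≤ expA) := by
  intro h; have := Finsupp.le_def.mp h 0; simp [ee, expA, Finsupp.single_apply] at this
lemma nle1B : ¬ (ee 0 1 + ee 3 1 ≤ expB) := by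
  intro h; have := Finsupp.le_def.mp h 0; simp [ee, expB, Finsupp.single_apply] at this
lemma nle1C : ¬ (ee 0 1 + ee 3 1 ≤ expC) := by
  intro h; have := Finsupp.le_def.mp h 3; simp [ee, expC, Finsupp.single_apply] at this
lemma nle2A : ¬ (ee 3 1 + ee 1 1 ≤ expA) := by
  intro h; have := Finsupp.le_def.mp h 1; simp [ee, expA, Finsupp.single_apply] at this
lemma nle2C : ¬ (ee 3 1 + ee 1 1 ≤ expC) := by
  intro h; have := Finsupp.le_def.mp h 3; simp [ee, expC, Finsupp.single_apply] at this
lemma nle3B : ¬ (ee 3 1 + ee 2 2 ≤ expB) := by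
  intro h; have := Finsupp.le_def.mp h 2; simp [ee, expB, Finsupp.single_apply] at this
lemma nle3C : ¬ (ee 3 1 + ee 2 2 ≤ expC) := by
  intro h; have := Finsupp.le_def.mp h 3; simp [ee, expC, Finsupp.single_apply] at this
lemma nle4A : ¬ (ee 2 2 + ee 0 2 ≤ expA) := by
  intro h; have := Finsupp.le_def.mp h 0; simp [ee, expA, Finsupp.single_apply] at this
lemma nle4B : ¬ (ee 2 2 + ee 0 2 ≤ expB) := by
  intro h; have := Finsupp.le_def.mp h 0; simp [ee, expB, Finsupp.single_apply] at this
lemma nle5B : ¬ (ee 2 2 + ee 3 4 ≤ expB) := by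
  intro h; have := Finsupp.le_def.mp h 2; simp [ee, expB, Finsupp.single_apply] at this
lemma nle5C : ¬ (ee 2 2 + ee 3 4 ≤ expC) := by
  intro h; have := Finsupp.le_def.mp h 3; simp [ee, expC, Finsupp.single_apply] at this

-- divisibility facts
lemma le2B : ee 3 1 + ee 1 1 ≤ expB := by
  rw [Finsupp.le_def]; intro i; fin_cases i <;> simp [ee, expB, Finsupp.single_apply]
lemma le3A : ee 3 1 + ee 2 2 ≤ expA := by
  rw [Finsupp.le_def]; intro i; fin_cases i <;> simp [ee, expA, Finsupp.single_apply]
lemma le4C : ee 2 2 + ee 0 2 ≤ expC := by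
  rw [Finsupp.le_def]; intro i; fin_cases i <;> simp [ee, expC, Finsupp.single_apply]
lemma le5A : ee 2 2 + ee 3 4 ≤ expA := by
  rw [Finsupp.le_def]; intro i; fin_cases i <;> simp [ee, expA, Finsupp.single_apply]

-- subtraction facts
lemma subB2 : expB - (ee 3 1 + ee 1 1) = ee 2 1 + ee 3 3 := by
  ext i; fin_cases i <;> simp [ee, expB, Finsupp.single_apply]
lemma subA3 : expA - (ee 3 1 + ee 2 2) = ee 2 1 + ee 3 3 := by
  ext i; fin_cases i <;> simp [ee, expA, Finsupp.single_apply]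
lemma subC4 : expC - (ee 2 2 + ee 0 2) = ee 2 1 := by
  ext i; fin_cases i <;> simp [ee, expC, Finsupp.single_apply]
lemma subA5 : expA - (ee 2 2 + ee 3 4) = ee 2 1 := by
  ext i; fin_cases i <;> simp [ee, expA, Finsupp.single_apply]

lemma lam_UV (q : MvPolynomial (Fin 4) K) : lam K (q * (X 0 * X 1)) = 0 := by
  rw [show (X 0 * X 1 : MvPolynomial (Fin 4) K) = monomial (ee 0 1 + ee 1 1) 1 by
    rw [hX1, hX1, monomial_mul, one_mul]]
  simp only [lam, coeffmul, if_neg (nle0A), if_neg (nle0B), if_neg (nle0C), add_zero]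

lemma lam_UZ (q : MvPolynomial (Fin 4) K) : lam K (q * (X 0 * X 3)) = 0 := by
  rw [show (X 0 * X 3 : MvPolynomial (Fin 4) K) = monomial (ee 0 1 + ee 3 1) 1 by
    rw [hX1, hX1, monomial_mul, one_mul]]
  simp only [lam, coeffmul, if_neg (nle1A), if_neg (nle1B), if_neg (nle1C), add_zero]

lemma lam_ZVY (q : MvPolynomial (Fin 4) K) : lam K (q * (X 3 * (X 1 - X 2 ^ 2))) = 0 := by
  have hg : (X 3 * (X 1 - X 2 ^ 2) : MvPolynomial (Fin 4) K)
      = monomial (ee 3 1 + ee 1 1) 1 - monomial (ee 3 1 + ee 2 2) 1 := by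
    rw [mul_sub, hX1, hX1, hX, monomial_mul, monomial_mul, one_mul]
  rw [hg, mul_sub]
  simp only [lam, coeff_sub, coeffmul, if_neg (nle2A), if_neg (nle2C), if_neg (nle3B),
    if_neg (nle3C), if_pos (le2B), if_pos (le3A), subB2, subA3]
  ring

lemma lam_g0 (q : MvPolynomial (Fin 4) K) : lam K (q * (X 2 ^ 2 * (X 0 ^ 2 - X 3 ^ 4))) = 0 := by
  have hg : (X 2 ^ 2 * (X 0 ^ 2 - X 3 ^ 4) : MvPolynomial (Fin 4) K)
      = monomial (ee 2 2 + ee 0 2) 1 - monomial (ee 2 2 + ee 3 4) 1 := by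
    rw [mul_sub, hX, hX, hX, monomial_mul, monomial_mul, one_mul]
  rw [hg, mul_sub]
  simp only [lam, coeff_sub, coeffmul, if_neg (nle4A), if_neg (nle4B), if_neg (nle5B),
    if_neg (nle5C), if_pos (le4C), if_pos (le5A), subC4, subA5]
  ring

lemma lam_target : lam K ((X 2 : MvPolynomial (Fin 4) K) ^ 3 * X 3 ^ 4) = 1 := by
  have h : ((X 2 : MvPolynomial (Fin 4) K) ^ 3 * X 3 ^ 4) = monomial expA 1 := by
    rw [hX, hX, monomial_mul, one_mul]; rfl
  rw [h, lam, coeff_monomial, coeff_monomial, coeff_monomial]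
  rw [if_pos rfl, if_neg, if_neg]
  · ring
  · intro hAC
    have := DFunLike.congr_fun hAC 0
    simp [expA, expC, ee, Finsupp.single_apply] at this
  · intro hAB
    have := DFunLike.congr_fun hAB 1
    simp [expA, expB, ee, Finsupp.single_apply] at this

end NotInIdealAux

/-- Let `K` be a field and `R = K[U,V,Y,Z]/(UV, UZ, Z(V-Y²))`.
Then `y³z⁴ ∉ (y²(u²-z⁴))R`, where lowercase letters denote the images of the
variables. -/
theorem not_in_ideal (K : Type) [Field K]
    (U V Y Z : MvPolynomial (Fin 4) K)
    (hU : U = X 0) (hV : V = X 1) (hY : Y = X 2) (hZ : Z = X 3)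
    (π : MvPolynomial (Fin 4) K →+*
      (MvPolynomial (Fin 4) K ⧸ Ideal.span {U * V, U * Z, Z * (V - Y ^ 2)}))
    (hπ : π = Ideal.Quotient.mk (Ideal.span {U * V, U * Z, Z * (V - Y ^ 2)})) :
    π (Y ^ 3 * Z ^ 4) ∉ Ideal.span {π (Y ^ 2 * (U ^ 2 - Z ^ 4))} := by
  subst hU hV hY hZ hπ
  intro hmem
  rw [Ideal.mem_span_singleton'] at hmem
  obtain ⟨r, hr⟩ := hmem
  obtain ⟨q, rfl⟩ := Ideal.Quotient.mk_surjective r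
  have h2 : (X 2 : MvPolynomial (Fin 4) K) ^ 3 * X 3 ^ 4 - q * (X 2 ^ 2 * (X 0 ^ 2 - X 3 ^ 4))
      ∈ Ideal.span {(X 0 : MvPolynomial (Fin 4) K) * X 1, X 0 * X 3, X 3 * (X 1 - X 2 ^ 2)} := by
    rw [← Ideal.Quotient.eq_zero_iff_mem, map_sub, sub_eq_zero, ← hr]; exact (map_mul _ _ _).symm
  rw [show ({(X 0 : MvPolynomial (Fin 4) K) * X 1, X 0 * X 3, X 3 * (X 1 - X 2 ^ 2)} : Set _)
    = insert ((X 0 : MvPolynomial (Fin 4) K) * X 1)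
        (insert ((X 0 : MvPolynomial (Fin 4) K) * X 3) {X 3 * (X 1 - X 2 ^ 2)}) from rfl,
    Ideal.mem_span_insert] at h2
  obtain ⟨q1, w, hw, he⟩ := h2
  rw [Ideal.mem_span_insert] at hw
  obtain ⟨q2, w2, hw2, he2⟩ := hw
  rw [Ideal.mem_span_singleton'] at hw2
  obtain ⟨q3, hq3⟩ := hw2
  have E : (X 2 : MvPolynomial (Fin 4) K) ^ 3 * X 3 ^ 4
      = q * (X 2 ^ 2 * (X 0 ^ 2 - X 3 ^ 4)) + (q1 * (X 0 * X 1)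
        + (q2 * (X 0 * X 3) + q3 * (X 3 * (X 1 - X 2 ^ 2)))) := by
    linear_combination he + he2 - hq3
  have hE := congrArg (lam K) E
  rw [lam_target, lam_add, lam_add, lam_add, lam_g0, lam_UV, lam_UZ, lam_ZVY] at hE
  norm_num at hE
end

section
/- In the polynomial ring $K[U,V,Y,Z]$ over a field $K$, the monomial $Y^3Z^4$ does not belong to the ideal $(Y^2(U^2-Z^4),\ UV,\ UZ,\ Z(V-Y^2))$. -/
open MvPolynomial

/-- In the polynomial ring `K[U,V,Y,Z]` over a field `K`, the
monomial `Y³Z⁴` does not belong to the ideal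
`(Y²(U²-Z⁴), UV, UZ, Z(V-Y²))`. -/
theorem monomial_not_in_ideal (K : Type) [Field K]
    (U V Y Z : MvPolynomial (Fin 4) K)
    (hU : U = X 0) (hV : V = X 1) (hY : Y = X 2) (hZ : Z = X 3) :
    Y ^ 3 * Z ^ 4 ∉
      Ideal.span {Y ^ 2 * (U ^ 2 - Z ^ 4), U * V, U * Z, Z * (V - Y ^ 2)} := by
  subst hU hV hY hZ
  intro h
  set s1 : Fin 4 →₀ ℕ := Finsupp.single 2 3 + Finsupp.single 3 4 with hs1
  set s2 : Fin 4 →₀ ℕ := Finsupp.single 0 2 + Finsupp.single 2 3 with hs2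
  set s3 : Fin 4 →₀ ℕ := Finsupp.single 1 1 + Finsupp.single 2 1 + Finsupp.single 3 4 with hs3
  set L : MvPolynomial (Fin 4) K → K := fun p => coeff s1 p + coeff s2 p + coeff s3 p with hL
  set a : Fin 4 →₀ ℕ := Finsupp.single 0 2 + Finsupp.single 2 2 with ha
  set b : Fin 4 →₀ ℕ := Finsupp.single 2 2 + Finsupp.single 3 4 with hb
  set c : Fin 4 →₀ ℕ := Finsupp.single 1 1 + Finsupp.single 3 1 with hc
  set e : Fin 4 →₀ ℕ := Finsupp.single 2 2 + Finsupp.single 3 1 with he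
  set d2 : Fin 4 →₀ ℕ := Finsupp.single 0 1 + Finsupp.single 1 1 with hd2
  set d3 : Fin 4 →₀ ℕ := Finsupp.single 0 1 + Finsupp.single 3 1 with hd3
  have Lsub : ∀ p q : MvPolynomial (Fin 4) K, L (p - q) = L p - L q := by
    intro p q; simp [hL, coeff_sub]; ring
  have hsimp : ∀ (p : MvPolynomial (Fin 4) K) (d : Fin 4 →₀ ℕ),
      L (p * monomial d 1) =
        (if d ≤ s1 then coeff (s1 - d) p else 0) +
        (if d ≤ s2 then coeff (s2 - d) p else 0) +
        (if d ≤ s3 then coeff (s3 - d) p else 0) := by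
    intro p d
    simp [hL, coeff_mul_monomial']
  -- decisions
  have has1 : ¬ a ≤ s1 := by
    intro hle; have := Finsupp.le_def.mp hle 0; simp [ha, hs1] at this
  have has2 : a ≤ s2 := by
    rw [Finsupp.le_def]; intro i; fin_cases i <;> simp [ha, hs2]
  have has3 : ¬ a ≤ s3 := by
    intro hle; have := Finsupp.le_def.mp hle 0; simp [ha, hs3] at this
  have hbs1 : b ≤ s1 := by
    rw [Finsupp.le_def]; intro i; fin_cases i <;> simp [hb, hs1]
  have hbs2 : ¬ b ≤ s2 := by
    intro hle; have := Finsupp.le_def.mp hle 3; simp [hb, hs2] at this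
  have hbs3 : ¬ b ≤ s3 := by
    intro hle; have := Finsupp.le_def.mp hle 2; simp [hb, hs3] at this
  have hcs1 : ¬ c ≤ s1 := by
    intro hle; have := Finsupp.le_def.mp hle 1; simp [hc, hs1] at this
  have hcs2 : ¬ c ≤ s2 := by
    intro hle; have := Finsupp.le_def.mp hle 1; simp [hc, hs2] at this
  have hcs3 : c ≤ s3 := by
    rw [Finsupp.le_def]; intro i; fin_cases i <;> simp [hc, hs3]
  have hes1 : e ≤ s1 := by
    rw [Finsupp.le_def]; intro i; fin_cases i <;> simp [he, hs1]
  have hes2 : ¬ e ≤ s2 := by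
    intro hle; have := Finsupp.le_def.mp hle 3; simp [he, hs2] at this
  have hes3 : ¬ e ≤ s3 := by
    intro hle; have := Finsupp.le_def.mp hle 2; simp [he, hs3] at this
  have hd2s1 : ¬ d2 ≤ s1 := by
    intro hle; have := Finsupp.le_def.mp hle 0; simp [hd2, hs1] at this
  have hd2s2 : ¬ d2 ≤ s2 := by
    intro hle; have := Finsupp.le_def.mp hle 1; simp [hd2, hs2] at this
  have hd2s3 : ¬ d2 ≤ s3 := by
    intro hle; have := Finsupp.le_def.mp hle 0; simp [hd2, hs3] at this
  have hd3s1 : ¬ d3 ≤ s1 := by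
    intro hle; have := Finsupp.le_def.mp hle 0; simp [hd3, hs1] at this
  have hd3s2 : ¬ d3 ≤ s2 := by
    intro hle; have := Finsupp.le_def.mp hle 3; simp [hd3, hs2] at this
  have hd3s3 : ¬ d3 ≤ s3 := by
    intro hle; have := Finsupp.le_def.mp hle 0; simp [hd3, hs3] at this
  -- subtraction identities
  have hsub1 : s2 - a = s1 - b := by
    ext i; fin_cases i <;> simp [hs1, hs2, ha, hb, Finsupp.tsub_apply]
  have hsub2 : s3 - c = s1 - e := by
    ext i; fin_cases i <;> simp [hs1, hs3, hc, he, Finsupp.tsub_apply]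
  -- key: L vanishes on multiples of each generator
  have key : ∀ x ∈ ({(X 2:MvPolynomial (Fin 4) K) ^ 2 * (X 0 ^ 2 - X 3 ^ 4), X 0 * X 1,
      X 0 * X 3, X 3 * (X 1 - X 2 ^ 2)} : Set (MvPolynomial (Fin 4) K)),
      ∀ r, L (r * x) = 0 := by
    intro x hx r
    simp only [Set.mem_insert_iff, Set.mem_singleton_iff] at hx
    rcases hx with hx | hx | hx | hx <;> subst hx
    · have hg : (X 2 : MvPolynomial (Fin 4) K) ^ 2 * (X 0 ^ 2 - X 3 ^ 4)
          = monomial a 1 - monomial b 1 := by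
        simp [X_pow_eq_monomial, mul_sub, monomial_mul, ha, hb, add_comm]
      rw [hg, mul_sub, Lsub, hsimp, hsimp,
        if_neg has1, if_pos has2, if_neg has3, if_pos hbs1, if_neg hbs2, if_neg hbs3, hsub1]
      ring
    · have hg : (X 0 : MvPolynomial (Fin 4) K) * X 1 = monomial d2 1 := by
        simp [X, monomial_mul, hd2]
      rw [hg, hsimp, if_neg hd2s1, if_neg hd2s2, if_neg hd2s3]; ring
    · have hg : (X 0 : MvPolynomial (Fin 4) K) * X 3 = monomial d3 1 := by
        simp [X, monomial_mul, hd3]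
      rw [hg, hsimp, if_neg hd3s1, if_neg hd3s2, if_neg hd3s3]; ring
    · have hg : (X 3 : MvPolynomial (Fin 4) K) * (X 1 - X 2 ^ 2)
          = monomial c 1 - monomial e 1 := by
        simp [X_pow_eq_monomial, X, mul_sub, monomial_mul, monomial_pow, hc, he, add_comm]
      rw [hg, mul_sub, Lsub, hsimp, hsimp,
        if_neg hcs1, if_neg hcs2, if_pos hcs3, if_pos hes1, if_neg hes2, if_neg hes3, hsub2]
      ring
  -- span induction: L (r * p) = 0 for every p in the ideal
  have main : ∀ r, L (r * (X 2 ^ 3 * X 3 ^ 4)) = 0 := by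
    refine Submodule.span_induction (p := fun x _ => ∀ r, L (r * x) = 0) key ?_ ?_ ?_ h
    · intro r; simp [hL]
    · intro x y _ _ hx hy r
      have : r * (x + y) = r * x + r * y := by ring
      rw [this]
      have hadd : ∀ p q : MvPolynomial (Fin 4) K, L (p + q) = L p + L q := by
        intro p q; simp [hL, coeff_add]; ring
      rw [hadd, hx, hy]; ring
    · intro t x _ hx r
      rw [smul_eq_mul, show r * (t * x) = (r * t) * x by ring, hx]
  have h1 := main 1
  rw [one_mul] at h1
  have hm : (X 2 : MvPolynomial (Fin 4) K) ^ 3 * X 3 ^ 4 = monomial s1 1 := by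
    simp [X_pow_eq_monomial, monomial_mul, hs1]
  rw [hm] at h1
  have hne2 : s1 ≠ s2 := by
    intro hq; have := DFunLike.congr_fun hq 0; simp [hs1, hs2] at this
  have hne3 : s1 ≠ s3 := by
    intro hq; have := DFunLike.congr_fun hq 1; simp [hs1, hs3] at this
  simp [hL, coeff_monomial, hne2, hne3] at h1
end

section
/- Let $K$ be a field of characteristic $p > 0$ and let $R = K[U,V,Y,Z]/(UV, UZ, Z(V-Y^2))$. Then $R$ is not F-pure; that is, there exists an $R$-module $M$ such that the map $M \to F(M)$ induced by the Frobenius is not injective. Concretely, the element $y^3z^4$ lies in the Frobenius closure of the ideal $I = (y^2(u^2-z^4))R$ but not in $I$ itself. -/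
open MvPolynomial

private lemma aux_pow {Q : Type*} [CommRing Q] (u v z : Q) (h : u * v = 0) :
    ∀ n : ℕ, v * (u ^ 2 - z ^ 4) ^ n = v * (-z ^ 4) ^ n
  | 0 => by simp
  | n + 1 => by
    have hv : v * (u ^ 2 - z ^ 4) = v * (-z ^ 4) := by linear_combination u * h
    calc v * (u ^ 2 - z ^ 4) ^ (n + 1)
        = (v * (u ^ 2 - z ^ 4)) * (u ^ 2 - z ^ 4) ^ n := by ring
      _ = (v * (-z ^ 4)) * (u ^ 2 - z ^ 4) ^ n := by rw [hv]
      _ = (-z ^ 4) * (v * (u ^ 2 - z ^ 4) ^ n) := by ring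
      _ = (-z ^ 4) * (v * (-z ^ 4) ^ n) := by rw [aux_pow u v z h n]
      _ = v * (-z ^ 4) ^ (n + 1) := by ring

private lemma key_aux {Q : Type*} [CommRing Q] (u v y z : Q)
    (h1 : u * v = 0) (h3 : z * v = z * y ^ 2) (p : ℕ) (hp2 : 2 ≤ p) :
    (y ^ 3 * z ^ 4) ^ p
      = ((-1) ^ p * (y ^ (p - 2) * v)) * (y ^ 2 * (u ^ 2 - z ^ 4)) ^ p := by
  obtain ⟨m, rfl⟩ : ∃ m, p = m + 2 := ⟨p - 2, by omega⟩
  have hpm : m + 2 - 2 = m := by omega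
  rw [hpm]
  have hL := aux_pow u v z h1 (m + 2)
  have hsign : ((-1 : Q)) ^ (m + 2) * (-z ^ 4 : Q) ^ (m + 2) = ((z ^ 4 : Q)) ^ (m + 2) := by
    rw [← mul_pow, neg_one_mul, neg_neg]
  calc (y ^ 3 * z ^ 4) ^ (m + 2)
      = y ^ m * (y ^ 2) ^ (m + 2) * (z ^ 4) ^ (m + 2) * v := by
        linear_combination (-(y ^ (3 * m + 4) * z ^ (4 * m + 7))) * h3
    _ = y ^ m * (y ^ 2) ^ (m + 2) * ((-1) ^ (m + 2) * (-z ^ 4) ^ (m + 2)) * v := by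
        rw [hsign]
    _ = (-1) ^ (m + 2) * (y ^ m * (y ^ 2) ^ (m + 2)) * (v * (-z ^ 4) ^ (m + 2)) := by ring
    _ = (-1) ^ (m + 2) * (y ^ m * (y ^ 2) ^ (m + 2)) * (v * (u ^ 2 - z ^ 4) ^ (m + 2)) := by
        rw [hL]
    _ = ((-1) ^ (m + 2) * (y ^ (m) * v)) * (y ^ 2 * (u ^ 2 - z ^ 4)) ^ (m + 2) := by
        rw [mul_pow]; ring

private lemma dvd_aux {K : Type} [Field K] (q r : MvPolynomial (Fin 3) K)
    (h : q * (X 2 ^ 2 * X 1) = r * X 0) : ∃ g, q = X 0 * g := by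
  have heq : (finSuccEquiv K 2) q * (finSuccEquiv K 2) (X 2 ^ 2 * X 1)
      = (finSuccEquiv K 2) r * Polynomial.X := by
    rw [← map_mul, h, map_mul, finSuccEquiv_X_zero]
  have hdvd : Polynomial.X ∣ (finSuccEquiv K 2) q * (finSuccEquiv K 2) (X 2 ^ 2 * X 1) :=
    ⟨(finSuccEquiv K 2) r, by rw [heq]; ring⟩
  rcases (Polynomial.prime_X).2.2 _ _ hdvd with h1 | h2
  · obtain ⟨g, hg⟩ := h1
    refine ⟨(finSuccEquiv K 2).symm g, ?_⟩
    have h2 := congrArg (finSuccEquiv K 2).symm hg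
    rw [AlgEquiv.symm_apply_apply, map_mul] at h2
    rw [h2]
    congr 1
    have : Polynomial.X = (finSuccEquiv K 2) (X 0) := (finSuccEquiv_X_zero).symm
    rw [this, AlgEquiv.symm_apply_apply]
  · exfalso
    obtain ⟨g, hg⟩ := h2
    have hX2 : (X (2 : Fin 3) : MvPolynomial (Fin 3) K) = X (Fin.succ 1) := rfl
    have hX1 : (X (1 : Fin 3) : MvPolynomial (Fin 3) K) = X (Fin.succ 0) := rfl
    rw [map_mul, map_pow, hX2, hX1, finSuccEquiv_X_succ, finSuccEquiv_X_succ,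
      ← map_pow, ← map_mul] at hg
    have h0 := congrArg (fun t => Polynomial.coeff t 0) hg
    simp only [Polynomial.coeff_C_zero, Polynomial.mul_coeff_zero,
      Polynomial.coeff_X_zero, zero_mul, mul_zero] at h0
    exact (by simp [X_ne_zero, pow_eq_zero_iff] :
      (X 1 ^ 2 * X 0 : MvPolynomial (Fin 2) K) ≠ 0) h0

private lemma not_mem_aux (K : Type) [Field K] :
    (X 2 ^ 3 * X 3 ^ 4 : MvPolynomial (Fin 4) K) ∉
      Ideal.span {X 2 ^ 2 * (X 0 ^ 2 - X 3 ^ 4), X 0 * X 1, X 0 * X 3,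
        X 3 * (X 1 - X 2 ^ 2)} := by
  intro hmem
  rw [Ideal.mem_span_insert] at hmem
  obtain ⟨c, w1, hw1, hE1⟩ := hmem
  rw [Ideal.mem_span_insert] at hw1
  obtain ⟨a, w2, hw2, hE2⟩ := hw1
  rw [Ideal.mem_span_insert] at hw2
  obtain ⟨b, w3, hw3, hE3⟩ := hw2
  rw [Ideal.mem_span_singleton'] at hw3
  obtain ⟨d, hE4⟩ := hw3
  subst hE2 hE3
  rw [← hE4] at hE1
  set φA : MvPolynomial (Fin 4) K →ₐ[K] MvPolynomial (Fin 2) K :=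
    aeval ![0, X 0 ^ 2, X 0, X 1] with hφA
  set φB : MvPolynomial (Fin 4) K →ₐ[K] MvPolynomial (Fin 3) K :=
    aeval ![X 1, X 0, X 2, 0] with hφB
  set χ : MvPolynomial (Fin 3) K →ₐ[K] Polynomial K :=
    aeval ![Polynomial.X ^ 2, 0, Polynomial.X] with hχ
  set ψ : MvPolynomial (Fin 2) K →ₐ[K] Polynomial K :=
    aeval ![Polynomial.X, 0] with hψ
  have hA := congrArg φA hE1
  simp only [map_add, map_mul, map_pow, map_sub, hφA, aeval_X,
    Matrix.cons_val_zero, Matrix.cons_val_one, Matrix.head_cons,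
    Matrix.cons_val_two, Matrix.cons_val_three, Matrix.tail_cons] at hA
  have hAfac : (X 0 ^ 2 * X 1 ^ 4 : MvPolynomial (Fin 2) K) * (X 0 + φA c) = 0 := by
    rw [hφA]; linear_combination hA
  have hA0 : (X 0 ^ 2 * X 1 ^ 4 : MvPolynomial (Fin 2) K) ≠ 0 := by
    simp [X_ne_zero, pow_eq_zero_iff]
  have hAc : φA c = -X 0 := by
    rcases mul_eq_zero.mp hAfac with h | h
    · exact absurd h hA0
    · linear_combination h
  have hB := congrArg φB hE1
  simp only [map_add, map_mul, map_pow, map_sub, hφB, aeval_X,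
    Matrix.cons_val_zero, Matrix.cons_val_one, Matrix.head_cons,
    Matrix.cons_val_two, Matrix.cons_val_three, Matrix.tail_cons] at hB
  have hBfac : ((φB c * (X 2 ^ 2 * X 1) + φB a * X 0) : MvPolynomial (Fin 3) K) * X 1 = 0 := by
    rw [hφB]; linear_combination -hB
  have hBeq : φB c * (X 2 ^ 2 * X 1) = (-(φB a)) * X 0 := by
    rcases mul_eq_zero.mp hBfac with h | h
    · linear_combination h
    · exact absurd h (X_ne_zero _)
  obtain ⟨g, hg⟩ := dvd_aux (φB c) (-(φB a)) hBeq
  have hcomp : χ.comp φB = ψ.comp φA := by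
    apply MvPolynomial.algHom_ext
    intro i
    fin_cases i <;>
      simp [hφA, hφB, hχ, hψ, AlgHom.comp_apply]
  have hc : χ (φB c) = ψ (φA c) := by
    have := DFunLike.congr_fun hcomp c
    simpa [AlgHom.comp_apply] using this
  rw [hg, hAc, map_mul, map_neg] at hc
  have hχX0 : χ (X 0) = Polynomial.X ^ 2 := by simp [hχ]
  have hψX0 : ψ (X 0) = Polynomial.X := by simp [hψ]
  rw [hχX0, hψX0] at hc
  have h1 := congrArg (fun t => Polynomial.coeff t 1) hc
  simp only [Polynomial.coeff_neg, Polynomial.coeff_X_one] at h1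
  rw [show (Polynomial.X : Polynomial K) ^ 2 * χ g
      = Polynomial.X * (Polynomial.X * χ g) by ring] at h1
  rw [show (1 : ℕ) = 0 + 1 from rfl, Polynomial.coeff_X_mul,
    Polynomial.mul_coeff_zero, Polynomial.coeff_X_zero, zero_mul] at h1
  exact one_ne_zero (neg_eq_zero.mp h1.symm)


/-- Let `K` be a field of characteristic `p > 0` and
`R = K[U,V,Y,Z]/(UV, UZ, Z(V-Y²))`.  Then `R` is not F-pure: not every ideal of
`R` is equal to its Frobenius closure.  Concretely, the element `y³z⁴` lies in
the Frobenius closure of the ideal `I = (y²(u²-z⁴))R` (indeed already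
`(y³z⁴)^p ∈ I^{[p]}`) but not in `I` itself.  Here, for an ideal `J` and
`q = p^e`, `J^{[q]}` is the ideal generated by the `q`-th powers of the
elements of `J`. -/
theorem not_F_pure (K : Type) [Field K] (p : ℕ) [Fact p.Prime] [CharP K p]
    (U V Y Z : MvPolynomial (Fin 4) K)
    (hU : U = X 0) (hV : V = X 1) (hY : Y = X 2) (hZ : Z = X 3)
    (π : MvPolynomial (Fin 4) K →+*
      (MvPolynomial (Fin 4) K ⧸ Ideal.span {U * V, U * Z, Z * (V - Y ^ 2)}))
    (hπ : π = Ideal.Quotient.mk (Ideal.span {U * V, U * Z, Z * (V - Y ^ 2)})) :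
    (∃ e : ℕ, (π (Y ^ 3 * Z ^ 4)) ^ p ^ e ∈
        Ideal.span ((· ^ p ^ e) ''
          ((Ideal.span {π (Y ^ 2 * (U ^ 2 - Z ^ 4))} : Ideal _) : Set _))) ∧
    π (Y ^ 3 * Z ^ 4) ∉ Ideal.span {π (Y ^ 2 * (U ^ 2 - Z ^ 4))} ∧
    ¬ (∀ (J : Ideal (MvPolynomial (Fin 4) K ⧸
          Ideal.span {U * V, U * Z, Z * (V - Y ^ 2)}))
        (x : MvPolynomial (Fin 4) K ⧸
          Ideal.span {U * V, U * Z, Z * (V - Y ^ 2)}),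
        (∃ e : ℕ, x ^ p ^ e ∈ Ideal.span ((· ^ p ^ e) '' (J : Set _))) →
          x ∈ J) := by
  have hp2 : 2 ≤ p := (Fact.out : p.Prime).two_le
  -- relations in the quotient
  have hπUV : π (U * V) = 0 := by
    rw [hπ, Ideal.Quotient.eq_zero_iff_mem]
    exact Ideal.subset_span (by simp)
  have hπZV : π (Z * (V - Y ^ 2)) = 0 := by
    rw [hπ, Ideal.Quotient.eq_zero_iff_mem]
    exact Ideal.subset_span (by simp)
  have h1 : π U * π V = 0 := by rw [← map_mul]; exact hπUV
  have h3 : π Z * π V = π Z * (π Y) ^ 2 := by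
    rw [map_mul, map_sub, map_pow] at hπZV
    linear_combination hπZV
  -- the key identity
  have key : (π (Y ^ 3 * Z ^ 4)) ^ p
      = ((-1) ^ p * ((π Y) ^ (p - 2) * π V)) * (π (Y ^ 2 * (U ^ 2 - Z ^ 4))) ^ p := by
    rw [map_mul, map_pow, map_pow, map_mul, map_pow, map_sub, map_pow, map_pow]
    exact key_aux (π U) (π V) (π Y) (π Z) h1 h3 p hp2
  -- part 1
  have part1 : ∃ e : ℕ, (π (Y ^ 3 * Z ^ 4)) ^ p ^ e ∈
      Ideal.span ((· ^ p ^ e) ''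
        ((Ideal.span {π (Y ^ 2 * (U ^ 2 - Z ^ 4))} : Ideal _) : Set _)) := by
    refine ⟨1, ?_⟩
    have hf : π (Y ^ 2 * (U ^ 2 - Z ^ 4)) ∈
        ((Ideal.span {π (Y ^ 2 * (U ^ 2 - Z ^ 4))} : Ideal _) : Set _) :=
      Ideal.subset_span (Set.mem_singleton _)
    have himg : (π (Y ^ 2 * (U ^ 2 - Z ^ 4))) ^ p ^ 1 ∈
        Ideal.span ((· ^ p ^ 1) ''
          ((Ideal.span {π (Y ^ 2 * (U ^ 2 - Z ^ 4))} : Ideal _) : Set _)) :=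
      Ideal.subset_span (Set.mem_image_of_mem _ hf)
    rw [pow_one] at himg ⊢
    rw [key]
    exact Ideal.mul_mem_left _ _ himg
  -- part 2
  have part2 : π (Y ^ 3 * Z ^ 4) ∉ Ideal.span {π (Y ^ 2 * (U ^ 2 - Z ^ 4))} := by
    intro hmem
    rw [hπ, Ideal.mem_span_singleton'] at hmem
    obtain ⟨cq, hcq⟩ := hmem
    obtain ⟨c, rfl⟩ := Ideal.Quotient.mk_surjective cq
    have hz : Y ^ 3 * Z ^ 4 - c * (Y ^ 2 * (U ^ 2 - Z ^ 4)) ∈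
        Ideal.span {U * V, U * Z, Z * (V - Y ^ 2)} := by
      rw [← Ideal.Quotient.eq_zero_iff_mem, map_sub, sub_eq_zero, ← hcq]
      exact (map_mul _ _ _).symm
    have hfm : Y ^ 2 * (U ^ 2 - Z ^ 4) ∈
        Ideal.span {Y ^ 2 * (U ^ 2 - Z ^ 4), U * V, U * Z, Z * (V - Y ^ 2)} :=
      Ideal.subset_span (Set.mem_insert _ _)
    have hsub : Ideal.span {U * V, U * Z, Z * (V - Y ^ 2)} ≤
        Ideal.span {Y ^ 2 * (U ^ 2 - Z ^ 4), U * V, U * Z, Z * (V - Y ^ 2)} :=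
      Ideal.span_mono (Set.subset_insert _ _)
    have big : Y ^ 3 * Z ^ 4 ∈
        Ideal.span {Y ^ 2 * (U ^ 2 - Z ^ 4), U * V, U * Z, Z * (V - Y ^ 2)} := by
      have heq : Y ^ 3 * Z ^ 4
          = (Y ^ 3 * Z ^ 4 - c * (Y ^ 2 * (U ^ 2 - Z ^ 4)))
            + c * (Y ^ 2 * (U ^ 2 - Z ^ 4)) := by ring
      rw [heq]
      exact Ideal.add_mem _ (hsub hz) (Ideal.mul_mem_left _ _ hfm)
    rw [hU, hV, hY, hZ] at big
    exact not_mem_aux K big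
  exact ⟨part1, part2, fun hall => part2 (hall _ _ part1)⟩
end

section
/- Let $R$ be a Noetherian ring of characteristic $p > 0$ and $I$ an ideal. Then the tight closure $I^*$ is contained in the integral closure $\bar{I}$ of $I$. -/
/-- The bracket power `I^{[q]}`: the ideal generated by `q`-th powers of
elements of `I`. -/
def bracketPower {R : Type} [CommRing R] (I : Ideal R) (q : ℕ) : Ideal R :=
  Ideal.span ((· ^ q) '' (I : Set R))

/-- The tight closure of an ideal `I` in a ring of characteristic `p`. -/
def tightClosure {R : Type} [CommRing R] (p : ℕ) (I : Ideal R) : Set R :=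
  {x | ∃ c : R, (∀ P ∈ minimalPrimes R, c ∉ P) ∧
    ∃ e₀ : ℕ, ∀ e : ℕ, e₀ ≤ e → c * x ^ p ^ e ∈ bracketPower I (p ^ e)}

/-- The integral closure of an ideal `I`: the set of `x` satisfying an
equation `x^n + a₁ x^(n-1) + ⋯ + aₙ = 0` with `aᵢ ∈ Iⁱ`. -/
def idealIntegralClosure {R : Type} [CommRing R] (I : Ideal R) : Set R :=
  {x | ∃ n : ℕ, 0 < n ∧ ∃ a : ℕ → R, (∀ i : ℕ, 1 ≤ i → i ≤ n → a i ∈ I ^ i) ∧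
    x ^ n + ∑ i ∈ Finset.Icc 1 n, a i * x ^ (n - i) = 0}


/-!
Fix a minimal prime `P` and let `K` be its residue field. The image of the Rees algebra `R[It]`
under `t ↦ x⁻¹` is the blow-up chart `R[I/x] ⊆ K`, a Noetherian domain. There
`c x^q ∈ I^[q] ⊆ I^q` says that `c ∈ (I/x)^q R[I/x]` for arbitrarily large `q`, so Krull's
intersection theorem gives `1 ∈ (I/x) R[I/x]`; clearing denominators, this is an equation of
integral dependence of `x` on `I` modulo `P`. Such monic equations are closed under products, and
the product over the finitely many minimal primes is nilpotent at `x`, so one of its powers is an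
equation of integral dependence in `R`.
-/

open Polynomial

lemma bracketPower_le_pow {R : Type} [CommRing R] (I : Ideal R) (q : ℕ) :
    bracketPower I q ≤ I ^ q :=
  Ideal.span_le.mpr <| by
    rintro _ ⟨a, ha, rfl⟩
    exact Ideal.pow_mem_pow ha q

namespace Ideal

variable {R : Type*} [CommRing R]

def integralPolys (I : Ideal R) : Submonoid R[X] where
  carrier := {f | f.Monic ∧ ∀ k, f.coeff k ∈ I ^ (f.natDegree - k)}
  one_mem' := ⟨monic_one, fun k => by simp [one_eq_top]⟩
  mul_mem' := by
    rintro f g ⟨hf, hfI⟩ ⟨hg, hgI⟩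
    refine ⟨hf.mul hg, fun k => ?_⟩
    rw [hf.natDegree_mul hg, coeff_mul]
    refine _root_.sum_mem fun ij hij => ?_
    have hk := Finset.HasAntidiagonal.mem_antidiagonal.mp hij
    refine pow_le_pow_right ?_ (pow_add I _ _ ▸ mul_mem_mul (hfI ij.1) (hgI ij.2))
    omega

variable {I : Ideal R}

theorem X_mem_integralPolys : X ∈ I.integralPolys := by
  refine ⟨monic_X, fun k => ?_⟩
  rcases k with _ | k
  · simp
  · rw [Nat.sub_eq_zero_of_le (natDegree_X_le.trans (by omega)), pow_zero, one_eq_top]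
    exact Submodule.mem_top

theorem X_pow_sub_reflect_mem_integralPolys {h : R[X]} (hh : h ∈ reesAlgebra I)
    (h0 : h.coeff 0 = 0) : X ^ h.natDegree - reflect h.natDegree h ∈ I.integralPolys := by
  set n := h.natDegree
  have hcoeff : ∀ k, (reflect n h).coeff k ∈ I ^ (n - k) := by
    intro k
    rw [coeff_reflect]
    rcases le_or_gt k n with hk | hk
    · rw [revAt_le hk]
      exact (mem_reesAlgebra_iff I h).mp hh _
    · rw [revAt_eq_self_of_lt hk, coeff_eq_zero_of_natDegree_lt hk]
      exact zero_mem _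
  have hdeg : (reflect n h).degree < n := by
    refine (degree_lt_iff_coeff_zero _ _).mpr fun m hm => ?_
    rw [coeff_reflect]
    rcases hm.eq_or_lt with rfl | hm
    · simpa using h0
    · rw [revAt_eq_self_of_lt hm, coeff_eq_zero_of_natDegree_lt hm]
  refine ⟨monic_X_pow_sub hdeg, fun k => ?_⟩
  have hle : (X ^ n - reflect n h).natDegree ≤ n :=
    (natDegree_sub_le_of_le (natDegree_X_pow_le n) (natDegree_le_iff_degree_le.mpr hdeg.le)).trans
      (max_self n).le
  refine pow_le_pow_right (Nat.sub_le_sub_right hle k) ?_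
  rw [coeff_sub, coeff_X_pow]
  refine sub_mem ?_ (hcoeff k)
  split_ifs with hk
  · simp [hk, one_eq_top]
  · exact zero_mem _

end Ideal

theorem mem_idealIntegralClosure_of_eval_eq_zero {R : Type} [CommRing R] {I : Ideal R}
    {f : R[X]} (hf : f ∈ I.integralPolys) {x : R} (hx : f.eval x = 0) :
    x ∈ idealIntegralClosure I := by
  obtain ⟨hmon, hcoeff⟩ : f.Monic ∧ _ := hf
  set n := f.natDegree
  rcases Nat.eq_zero_or_pos n with h0 | hpos
  · have : Subsingleton R := by
      rw [hmon.natDegree_eq_zero.mp h0, eval_one] at hx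
      exact subsingleton_of_zero_eq_one hx.symm
    exact ⟨1, one_pos, 0, fun i _ _ => zero_mem _, Subsingleton.elim _ _⟩
  refine ⟨n, hpos, fun i => f.coeff (n - i),
    fun i _ hin => by simpa [Nat.sub_sub_self hin] using hcoeff (n - i), ?_⟩
  rw [show Finset.Icc 1 n = Finset.Ico 1 (n + 1) from rfl,
    Finset.sum_Ico_reflect (fun j => f.coeff j * x ^ j) _ le_rfl,
    Nat.sub_self, Nat.add_sub_cancel, Nat.Ico_zero_eq_range]
  rw [eval_eq_sum_range, Finset.sum_range_succ, hmon.coeff_natDegree] at hx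
  simpa [add_comm] using hx

theorem Ideal.eq_top_of_forall_mem_pow {A : Type*} [CommRing A] [IsNoetherianRing A] [IsDomain A]
    {J : Ideal A} {c : A} (hc : c ≠ 0) (h : ∀ n, c ∈ J ^ n) : J = ⊤ := by
  by_contra hJ
  have hc' : c ∈ (⊥ : Ideal A) := by
    rw [← Ideal.iInf_pow_eq_bot_of_isDomain (I := J) hJ]
    exact Submodule.mem_iInf _ |>.mpr h
  exact hc (Ideal.mem_bot.mp hc')

theorem Ideal.map_mem_pow_of_mul_pow_mem {A B : Type*} [CommRing A] [CommRing B] [IsDomain B]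
    (f : A →+* B) {I : Ideal A} {J : Ideal B} {x c : A} (hIJ : I.map f ≤ span {f x} * J)
    (hx : f x ≠ 0) {q : ℕ} (hq : c * x ^ q ∈ I ^ q) : f c ∈ J ^ q := by
  have h : f (c * x ^ q) ∈ span {f x ^ q} * J ^ q := by
    rw [← span_singleton_pow, ← mul_pow]
    exact pow_right_mono hIJ q (Ideal.map_pow f I q ▸ mem_map_of_mem f hq)
  obtain ⟨j, hj, hjc⟩ := mem_span_singleton_mul.mp h
  rw [map_mul, map_pow, mul_comm (f c), mul_right_inj' (pow_ne_zero q hx)] at hjc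
  exact hjc ▸ hj

theorem exists_mem_reesAlgebra_aeval_inv_eq_one {R K : Type*} [CommRing R] [IsNoetherianRing R]
    [Field K] [Algebra R K] (I : Ideal R) {x c : R}
    (hx : algebraMap R K x ≠ 0) (hc : algebraMap R K c ≠ 0)
    (H : ∀ n, ∃ q, n ≤ q ∧ c * x ^ q ∈ I ^ q) :
    ∃ h ∈ reesAlgebra I, h.coeff 0 = 0 ∧ aeval (algebraMap R K x)⁻¹ h = 1 := by
  set u := algebraMap R K x
  set φ := (aeval u⁻¹).comp (reesAlgebra I).val
  have : Algebra.FiniteType R (reesAlgebra I) :=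
    (Subalgebra.fg_iff_finiteType _).mp (reesAlgebra.fg (IsNoetherian.noetherian I))
  have : Algebra.FiniteType R φ.range := .of_surjective _ φ.rangeRestrict_surjective
  have := Algebra.FiniteType.isNoetherianRing R φ.range
  -- `J = (I/x) R[I/x]`, the image of the irrelevant ideal of the Rees algebra
  set J : Ideal φ.range :=
    ((RingHom.ker (constantCoeff : R[X] →+* R)).comap (reesAlgebra I).val).map φ.rangeRestrict
  have hIJ : I.map (algebraMap R φ.range) ≤ Ideal.span {algebraMap R φ.range x} * J := by
    rw [Ideal.map_le_iff_le_comap]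
    intro a ha
    rw [Ideal.mem_comap, Ideal.mem_span_singleton_mul]
    refine ⟨φ.rangeRestrict ⟨monomial 1 a, reesAlgebra.monomial_mem.mpr (by simpa using ha)⟩,
      Ideal.mem_map_of_mem _ (RingHom.mem_ker.mpr (by simp)), Subtype.ext ?_⟩
    show u * aeval u⁻¹ (monomial 1 a) = algebraMap R K a
    rw [aeval_monomial, pow_one, mul_left_comm, mul_inv_cancel₀ hx, mul_one]
  have hxT : algebraMap R φ.range x ≠ 0 := fun h0 => hx (congrArg Subtype.val h0)
  have hcT : algebraMap R φ.range c ≠ 0 := fun h0 => hc (congrArg Subtype.val h0)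
  have hJ : J = ⊤ := Ideal.eq_top_of_forall_mem_pow hcT fun n => by
    obtain ⟨q, hnq, hq⟩ := H n
    exact Ideal.pow_le_pow_right hnq (Ideal.map_mem_pow_of_mul_pow_mem _ hIJ hxT hq)
  obtain ⟨g, hg, hg1⟩ := (Ideal.mem_map_iff_of_surjective _ φ.rangeRestrict_surjective).mp
    (hJ ▸ Submodule.mem_top : (1 : φ.range) ∈ J)
  exact ⟨g, g.2, by simpa using RingHom.mem_ker.mp hg, congrArg Subtype.val hg1⟩

theorem exists_mem_integralPolys_algebraMap_eval_eq_zero {R K : Type*} [CommRing R]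
    [IsNoetherianRing R] [Field K] [Algebra R K] (I : Ideal R) {x c : R}
    (hc : algebraMap R K c ≠ 0) (H : ∀ n, ∃ q, n ≤ q ∧ c * x ^ q ∈ I ^ q) :
    ∃ f ∈ I.integralPolys, algebraMap R K (f.eval x) = 0 := by
  by_cases hx : algebraMap R K x = 0
  · exact ⟨X, Ideal.X_mem_integralPolys, by rwa [eval_X]⟩
  obtain ⟨h, hh, h0, h1⟩ := exists_mem_reesAlgebra_aeval_inv_eq_one I hx hc H
  refine ⟨_, Ideal.X_pow_sub_reflect_mem_integralPolys hh h0, ?_⟩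
  set u := algebraMap R K x
  have : Invertible u⁻¹ := invertibleOfNonzero (inv_ne_zero hx)
  have hrefl := eval₂_reflect_mul_pow (algebraMap R K) u⁻¹ h.natDegree h le_rfl
  rw [invOf_eq_inv, inv_inv, ← aeval_def, ← aeval_def, h1, inv_pow,
    mul_inv_eq_one₀ (pow_ne_zero _ hx)] at hrefl
  rw [← aeval_algebraMap_apply_eq_algebraMap_eval, map_sub, map_pow, aeval_X, hrefl, sub_self]

theorem Submonoid.zero_mem_of_forall_minimalPrimes {R : Type*} [CommRing R]
    (hfin : (minimalPrimes R).Finite) {S : Submonoid R}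
    (h : ∀ P ∈ minimalPrimes R, ∃ s ∈ S, s ∈ P) : (0 : R) ∈ S := by
  classical
  choose! s hsS hsP using h
  set t := ∏ P ∈ hfin.toFinset, s P
  have htS : t ∈ S := S.prod_mem fun P hP => hsS P (hfin.mem_toFinset.mp hP)
  have ht : t ∈ nilradical R := by
    rw [nilradical, ← Ideal.sInf_minimalPrimes]
    exact Submodule.mem_sInf.mpr fun P hP =>
      Ideal.mem_of_dvd _ (Finset.dvd_prod_of_mem s (hfin.mem_toFinset.mpr hP)) (hsP P hP)
  obtain ⟨k, hk⟩ := mem_nilradical.mp ht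
  exact hk ▸ pow_mem htS k

theorem tightClosure_subset_integralClosure_general
    (R : Type) [CommRing R] [IsNoetherianRing R] (p : ℕ) [Fact p.Prime]
    (I : Ideal R) :
    tightClosure p I ⊆ idealIntegralClosure I := by
  rintro x ⟨c, hc, e₀, he⟩
  have H : ∀ n, ∃ q, n ≤ q ∧ c * x ^ q ∈ I ^ q := fun n =>
    ⟨p ^ max e₀ n, (le_max_right e₀ n).trans (Nat.lt_pow_self (Fact.out : p.Prime).one_lt).le,
      bracketPower_le_pow I _ (he _ (le_max_left e₀ n))⟩
  obtain ⟨f, hf, hfx⟩ : (0 : R) ∈ I.integralPolys.map (evalRingHom x) := by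
    refine Submonoid.zero_mem_of_forall_minimalPrimes
      (minimalPrimes.finite_of_isNoetherianRing R) fun P hP => ?_
    have := hP.isPrime
    obtain ⟨f, hf, hfP⟩ := exists_mem_integralPolys_algebraMap_eval_eq_zero
      (K := P.ResidueField) I (by simpa using hc P hP) H
    exact ⟨_, ⟨f, hf, rfl⟩, Ideal.algebraMap_residueField_eq_zero.mp hfP⟩
  exact mem_idealIntegralClosure_of_eval_eq_zero hf hfx

/-- Let `R` be a Noetherian ring of characteristic `p > 0` and `I`
an ideal.  Then the tight closure `I^*` is contained in the integral closure
`Ī` of `I`. -/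
theorem tightClosure_subset_integralClosure
    (R : Type) [CommRing R] [IsNoetherianRing R] (p : ℕ) [Fact p.Prime]
    [CharP R p] (I : Ideal R) :
    tightClosure p I ⊆ idealIntegralClosure I :=
  tightClosure_subset_integralClosure_general R p I
end

section
/- Let $R$ be a regular Noetherian ring of characteristic $p > 0$ (so the Frobenius endomorphism is flat). Then every ideal of $R$ equals its Frobenius closure: for all ideals $I$ and $x \in R$, if $x^q \in I^{[q]}$ for some $q = p^e$, then $x \in I$. -/
namespace RingHom.FaithfullyFlat

theorem comap_map_eq_self {R S : Type*} [CommRing R] [CommRing S] {f : R →+* S}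
    (hf : f.FaithfullyFlat) (I : Ideal R) : (I.map f).comap f = I := by
  algebraize [f]
  exact I.comap_map_eq_self_of_faithfullyFlat

end RingHom.FaithfullyFlat

section Frobenius

variable {R : Type*} [CommRing R] (p : ℕ) [ExpChar R p]

theorem PrimeSpectrum.comap_iterateFrobenius (n : ℕ) (P : PrimeSpectrum R) :
    PrimeSpectrum.comap (iterateFrobenius R p n) P = P := by
  ext x
  exact P.isPrime.pow_mem_iff_mem _ (expChar_pow_pos R p n)

theorem RingHom.Flat.iterateFrobenius (hflat : (frobenius R p).Flat) (n : ℕ) :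
    (iterateFrobenius R p n).Flat := by
  induction n with
  | zero => simpa only [iterateFrobenius_zero] using RingHom.Flat.id R
  | succ n ih =>
    rw [iterateFrobenius_add, iterateFrobenius_one]
    exact hflat.comp ih

theorem RingHom.FaithfullyFlat.iterateFrobenius (hflat : (frobenius R p).Flat) (n : ℕ) :
    (iterateFrobenius R p n).FaithfullyFlat :=
  RingHom.FaithfullyFlat.iff_flat_and_comap_surjective.mpr
    ⟨.iterateFrobenius p hflat n, fun P ↦ ⟨P, PrimeSpectrum.comap_iterateFrobenius p n P⟩⟩

end Frobenius

theorem bracketPower_pow_eq_map_iterateFrobenius {R : Type} [CommRing R] (p : ℕ) [ExpChar R p]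
    (I : Ideal R) (n : ℕ) : bracketPower I (p ^ n) = I.map (iterateFrobenius R p n) :=
  rfl

theorem frobeniusClosed_of_regular_general
    (R : Type) [CommRing R] (p : ℕ) [Fact p.Prime]
    [CharP R p] (hreg : (frobenius R p).Flat) :
    ∀ (I : Ideal R) (x : R), (∃ e : ℕ, x ^ p ^ e ∈ bracketPower I (p ^ e)) →
      x ∈ I := by
  rintro I x ⟨e, hx⟩
  rw [bracketPower_pow_eq_map_iterateFrobenius] at hx
  rw [← (RingHom.FaithfullyFlat.iterateFrobenius p hreg e).comap_map_eq_self I]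
  exact hx

/-- Let `R` be a regular Noetherian ring of characteristic
`p > 0`; by Kunz's theorem, for a Noetherian ring of characteristic `p`,
regularity is *equivalent* to flatness of the Frobenius endomorphism, and it is
precisely this flatness that is the hypothesis used.  Then every ideal of `R`
equals its Frobenius closure: for all ideals `I` and `x ∈ R`, if
`x^q ∈ I^{[q]}` for some `q = p^e`, then `x ∈ I`. -/
theorem frobeniusClosed_of_regular
    (R : Type) [CommRing R] [IsNoetherianRing R] (p : ℕ) [Fact p.Prime]
    [CharP R p] (hreg : (frobenius R p).Flat) :
    ∀ (I : Ideal R) (x : R), (∃ e : ℕ, x ^ p ^ e ∈ bracketPower I (p ^ e)) →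
      x ∈ I :=
  frobeniusClosed_of_regular_general R p hreg
end

section
/- Let $K$ be a field, $n$ and $k$ positive integers, and $\alpha_1,\dots,\alpha_k$ distinct nonzero elements of $K$. In the field $K(X,Y)$, set $\Delta = \prod_{j=1}^k (X - \alpha_j Y)$, $\Delta_i = \Delta / (X - \alpha_i Y)$, and $A_i = \Delta_i X Y^n / \Delta$ for $1 \le i \le k$. Then for all $i \neq j$, the product $A_i A_j$ lies in the ideal generated by $Y$ in the subring $R = K[Y, A_1, \dots, A_k]$ of $K(X,Y)$. -/
/-!
Since `Δᵢ / Δ = 1 / (X - αᵢY)`, we have `Aᵢ = XYⁿ / (X - αᵢY)`. The partial fraction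
identity `αⱼ/(X - αⱼY) - αᵢ/(X - αᵢY) = (αⱼ - αᵢ) X / ((X - αᵢY)(X - αⱼY))` then gives
`AᵢAⱼ = Yⁿ (αⱼAⱼ - αᵢAᵢ) / (αⱼ - αᵢ)`, which is `Y` times an element of `R` as soon as
`n ≥ 1`.
-/

open MvPolynomial

theorem mul_div_sub_mul_eq {F : Type*} [Field F] {x y z a b : F}
    (ha : x - a * y ≠ 0) (hb : x - b * y ≠ 0) (hab : a ≠ b) :
    x * z / (x - a * y) * (x * z / (x - b * y)) =
      z * ((b - a)⁻¹ * (b * (x * z / (x - b * y)) - a * (x * z / (x - a * y)))) := by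
  have hba : b - a ≠ 0 := sub_ne_zero.mpr hab.symm
  have partial_fractions : b * (x * z / (x - b * y)) - a * (x * z / (x - a * y)) =
      (b - a) * (x * (x * z) / ((x - a * y) * (x - b * y))) := by
    rw [mul_div_assoc', mul_div_assoc', div_sub_div _ _ hb ha, mul_div_assoc',
      div_eq_div_iff (mul_ne_zero hb ha) (mul_ne_zero ha hb)]
    ring
  rw [partial_fractions, inv_mul_cancel_left₀ hba, div_mul_div_comm]
  ring

theorem Finset.prod_erase_mul_div_prod {ι F : Type*} [Field F] [DecidableEq ι] {s : Finset ι}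
    {i : ι} (hi : i ∈ s) {f : ι → F} (hf : ∀ j ∈ s, f j ≠ 0) (c : F) :
    (∏ j ∈ s.erase i, f j) * c / ∏ j ∈ s, f j = c / f i := by
  have hprod : ∏ j ∈ s.erase i, f j ≠ 0 :=
    Finset.prod_ne_zero_iff.mpr fun j hj => hf j (Finset.mem_of_mem_erase hj)
  rw [← Finset.prod_erase_mul _ _ hi, mul_div_mul_left _ _ hprod]

theorem MvPolynomial.X_zero_sub_C_mul_X_one_ne_zero {K : Type*} [Field K] (c : K) :
    (X 0 - C c * X 1 : MvPolynomial (Fin 2) K) ≠ 0 := by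
  intro h
  simpa using congrArg (eval ![1, 0]) h

theorem FractionRing.X_zero_sub_mul_X_one_ne_zero {K : Type*} [Field K] (c : K) :
    algebraMap (MvPolynomial (Fin 2) K) (FractionRing (MvPolynomial (Fin 2) K)) (X 0) -
      algebraMap K _ c * algebraMap (MvPolynomial (Fin 2) K) _ (X 1) ≠ 0 := by
  rw [IsScalarTower.algebraMap_apply K (MvPolynomial (Fin 2) K), algebraMap_eq, ← map_mul,
    ← map_sub]
  exact (map_ne_zero_iff _ (IsFractionRing.injective _ _)).mpr (X_zero_sub_C_mul_X_one_ne_zero c)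

theorem product_in_ideal_Y_general (K : Type) [Field K] (n k : ℕ) (hn : 0 < n)
    (α : Fin k → K) (hα : Function.Injective α)
    (x y : FractionRing (MvPolynomial (Fin 2) K))
    (hx : x = algebraMap (MvPolynomial (Fin 2) K) _ (X 0))
    (hy : y = algebraMap (MvPolynomial (Fin 2) K) _ (X 1))
    (Δ : FractionRing (MvPolynomial (Fin 2) K))
    (hΔ : Δ = ∏ j : Fin k, (x - algebraMap K _ (α j) * y))
    (A : Fin k → FractionRing (MvPolynomial (Fin 2) K))
    (hA : ∀ i, A i =
      (∏ j ∈ Finset.univ.erase i, (x - algebraMap K _ (α j) * y)) * x * y ^ n / Δ) :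
    ∀ i j : Fin k, i ≠ j →
      ∃ r ∈ Algebra.adjoin K ({y} ∪ Set.range A), A i * A j = y * r := by
  obtain ⟨m, rfl⟩ : ∃ m, n = m + 1 := ⟨n - 1, (Nat.succ_pred_eq_of_pos hn).symm⟩
  have hlin : ∀ c : K, x - algebraMap K _ c * y ≠ 0 := fun c => by
    subst hx hy; exact FractionRing.X_zero_sub_mul_X_one_ne_zero c
  have hA' : ∀ i, A i = x * y ^ (m + 1) / (x - algebraMap K _ (α i) * y) := fun i => by
    rw [hA, hΔ, mul_assoc, Finset.prod_erase_mul_div_prod (Finset.mem_univ i)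
      fun j _ => hlin (α j)]
  intro i j hij
  set R := Algebra.adjoin K ({y} ∪ Set.range A)
  have hyR : y ∈ R := Algebra.subset_adjoin (Set.mem_union_left _ rfl)
  have hAR : ∀ l, A l ∈ R := fun l => Algebra.subset_adjoin (Set.mem_union_right _ ⟨l, rfl⟩)
  refine ⟨y ^ m * (algebraMap K _ (α j - α i)⁻¹ *
    (algebraMap K _ (α j) * A j - algebraMap K _ (α i) * A i)), ?_, ?_⟩
  · exact mul_mem (pow_mem hyR m) (mul_mem (R.algebraMap_mem _)
      (sub_mem (mul_mem (R.algebraMap_mem _) (hAR j)) (mul_mem (R.algebraMap_mem _) (hAR i))))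
  · rw [hA' i, hA' j, mul_div_sub_mul_eq (hlin (α i)) (hlin (α j))
      ((algebraMap K _).injective.ne (hα.ne hij)), map_inv₀, map_sub, pow_succ', mul_assoc]

/-- Let `K` be a field, `n, k` positive integers, and
`α₁, …, α_k` distinct nonzero elements of `K`.  In the field `K(X,Y)`, set
`Δ = ∏ⱼ (X - αⱼY)`, `Δᵢ = Δ/(X - αᵢY)`, and `Aᵢ = Δᵢ X Yⁿ / Δ`.  Then for all
`i ≠ j`, the product `AᵢAⱼ` lies in the ideal generated by `Y` in the subring
`R = K[Y, A₁, …, A_k]` of `K(X,Y)`, i.e. `AᵢAⱼ = Y·r` for some `r ∈ R`. -/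
theorem product_in_ideal_Y (K : Type) [Field K] (n k : ℕ) (hn : 0 < n)
    (hk : 0 < k) (α : Fin k → K) (hα : Function.Injective α)
    (hα0 : ∀ i, α i ≠ 0)
    (x y : FractionRing (MvPolynomial (Fin 2) K))
    (hx : x = algebraMap (MvPolynomial (Fin 2) K) _ (X 0))
    (hy : y = algebraMap (MvPolynomial (Fin 2) K) _ (X 1))
    (Δ : FractionRing (MvPolynomial (Fin 2) K))
    (hΔ : Δ = ∏ j : Fin k, (x - algebraMap K _ (α j) * y))
    (A : Fin k → FractionRing (MvPolynomial (Fin 2) K))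
    (hA : ∀ i, A i =
      (∏ j ∈ Finset.univ.erase i, (x - algebraMap K _ (α j) * y)) * x * y ^ n / Δ) :
    ∀ i j : Fin k, i ≠ j →
      ∃ r ∈ Algebra.adjoin K ({y} ∪ Set.range A), A i * A j = y * r :=
  product_in_ideal_Y_general K n k hn α hα x y hx hy Δ hΔ A hA
end

section
/- Let $R = K[T,U,V,W]/(T^8 - UV,\ T^4(V-W) - VW,\ U(V-W) - T^4 W)$ over a field $K$. Then $R$ is isomorphic to the subring $K[t, t^4x, t^4x^{-1}, t^4(x+1)^{-1}]$ of $K(t,x)$, via $t \mapsto t$, $u \mapsto t^4 x$, $v \mapsto t^4 x^{-1}$, $w \mapsto t^4 (x+1)^{-1}$. -/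
/-!
Modulo the relations `UV = T⁸`, `VW = T⁴(V - W)` and `U(V - W) = T⁴W`, a product of two distinct
variables among `U, V, W` can always be rewritten, so every polynomial is congruent to a normal form
`p(T,U) + q(T,V)·V + r(T,W)·W`. Under the substitution this becomes
`p(t, t⁴x) + q(t, t⁴/x)·t⁴/x + r(t, t⁴/(x+1))·t⁴/(x+1)`: a polynomial in `x` plus polar parts at
`x = 0` and `x = -1`. After clearing denominators, evaluation at `x = 0` and at `x = -1` isolates
the leading coefficients of the two polar parts, so a normal form with vanishing image is zero, and the
kernel is exactly the ideal of relations.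
-/

open scoped Polynomial.Bivariate

namespace Presentation

section NormalForm

open Polynomial

variable {K S : Type*} [CommRing K] [CommRing S] [Algebra K S]

theorem aevalAeval_eq_eval₂ (x y : S) (p : K[X][Y]) :
    aevalAeval x y p = p.eval₂ (aeval x).toRingHom y := by
  induction p using Polynomial.induction_on with
  | C a => simp
  | add p q hp hq => simp_all
  | monomial n a ih => simp_all [pow_succ, ← mul_assoc]

theorem aevalAeval_comp (x y : S) (p g : K[X][Y]) :
    aevalAeval x y (p.comp g) = aevalAeval x (aevalAeval x y g) p := by
  induction p using Polynomial.induction_on with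
  | C a => simp
  | add p q hp hq => simp_all
  | monomial n a ih => simp_all [pow_succ, ← mul_assoc]

theorem aevalAeval_eq_coeff_zero_add_divX (x y : S) (p : K[X][Y]) :
    aevalAeval x y p = aeval x (p.coeff 0) + aevalAeval x y p.divX * y := by
  conv_lhs => rw [← p.divX_mul_X_add]
  simp [add_comm]

theorem map_aevalAeval {S' : Type*} [CommRing S'] [Algebra K S'] (f : S →ₐ[K] S')
    (x y : S) (p : K[X][Y]) : f (aevalAeval x y p) = aevalAeval (f x) (f y) p := by
  rw [← AlgHom.comp_apply]
  congr 1
  ext <;> simp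

theorem aevalAeval_mem_adjoin (x y : S) (p : K[X][Y]) :
    aevalAeval x y p ∈ Algebra.adjoin K {x, y} := by
  induction p using Polynomial.induction_on with
  | C a =>
    rw [aevalAeval_C]
    exact Algebra.adjoin_mono (by simp) (aeval_mem_adjoin_singleton K x)
  | add p q hp hq => simpa using add_mem hp hq
  | monomial n a ih =>
    rw [pow_succ, ← mul_assoc, map_mul, aevalAeval_Y]
    exact mul_mem ih (Algebra.subset_adjoin (by simp))

theorem mul_mem_of_mem_adjoin {N : Submodule K S} {G : Set S}
    (hG : ∀ g ∈ G, ∀ n ∈ N, g * n ∈ N) {a : S} (ha : a ∈ Algebra.adjoin K G) :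
    ∀ n ∈ N, a * n ∈ N := by
  induction ha using Algebra.adjoin_induction with
  | mem g hg => exact hG g hg
  | algebraMap c => intro n hn; simpa [← Algebra.smul_def] using N.smul_mem c hn
  | add a b _ _ ha hb => intro n hn; simpa [add_mul] using N.add_mem (ha n hn) (hb n hn)
  | mul a b _ _ ha hb => intro n hn; simpa [mul_assoc] using ha _ (hb n hn)

noncomputable def normalForm (t u v w : S) : K[X][Y] × K[X][Y] × K[X][Y] →ₗ[K] S :=
  (aevalAeval t u).toLinearMap.coprod
    ((LinearMap.mulRight K v ∘ₗ (aevalAeval t v).toLinearMap).coprod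
      (LinearMap.mulRight K w ∘ₗ (aevalAeval t w).toLinearMap))

@[simp]
theorem normalForm_apply (t u v w : S) (p q r : K[X][Y]) :
    normalForm t u v w (p, q, r) =
      aevalAeval t u p + aevalAeval t v q * v + aevalAeval t w r * w := by
  simp [normalForm, add_assoc]

theorem map_normalForm {S' : Type*} [CommRing S'] [Algebra K S'] (f : S →ₐ[K] S')
    (t u v w : S) (z : K[X][Y] × K[X][Y] × K[X][Y]) :
    f (normalForm t u v w z) = normalForm (f t) (f u) (f v) (f w) z := by
  obtain ⟨p, q, r⟩ := z
  simp only [normalForm_apply, map_add, map_mul, map_aevalAeval]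

namespace normalForm

variable {t u v w : S}

local notation "N" => LinearMap.range (normalForm (K := K) t u v w)

theorem pow_mul_mem (k : ℕ) {n : S} (hn : n ∈ N) : t ^ k * n ∈ N := by
  obtain ⟨⟨p, q, r⟩, rfl⟩ := hn
  refine ⟨(C (X ^ k) * p, C (X ^ k) * q, C (X ^ k) * r), ?_⟩
  simp only [normalForm_apply, map_mul, aevalAeval_C, aeval_X_pow]
  ring

theorem aevalAeval_u_mem (s : K[X][Y]) : aevalAeval t u s ∈ N :=
  ⟨(s, 0, 0), by simp⟩

theorem aevalAeval_v_mem (s : K[X][Y]) : aevalAeval t v s ∈ N :=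
  ⟨(C (s.coeff 0), s.divX, 0), by rw [aevalAeval_eq_coeff_zero_add_divX]; simp⟩

theorem aevalAeval_w_mem (s : K[X][Y]) : aevalAeval t w s ∈ N :=
  ⟨(C (s.coeff 0), 0, s.divX), by rw [aevalAeval_eq_coeff_zero_add_divX]; simp⟩

theorem aevalAeval_mul_v_mem (s : K[X][Y]) : aevalAeval t v s * v ∈ N :=
  ⟨(0, s, 0), by simp⟩

theorem aevalAeval_mul_w_mem (s : K[X][Y]) : aevalAeval t w s * w ∈ N :=
  ⟨(0, 0, s), by simp⟩

theorem v_mem : v ∈ N := ⟨(0, 1, 0), by simp⟩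

theorem w_mem : w ∈ N := ⟨(0, 0, 1), by simp⟩

theorem aevalAeval_mul_mem {y : S} (hy : ∀ n ∈ N, y * n ∈ N) (s : K[X][Y]) {n : S}
    (hn : n ∈ N) : aevalAeval t y s * n ∈ N := by
  refine mul_mem_of_mem_adjoin ?_ (aevalAeval_mem_adjoin t y s) n hn
  rintro g (rfl | rfl)
  exacts [fun n hn => by simpa using pow_mul_mem 1 hn, hy]

theorem u_mul_mem (h₁ : t ^ 8 = u * v) (h₃ : u * (v - w) = t ^ 4 * w) {n : S} (hn : n ∈ N) :
    u * n ∈ N := by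
  obtain ⟨⟨p, q, r⟩, rfl⟩ := hn
  have hsplit : u * normalForm t u v w (p, q, r) = aevalAeval t u (Y * p)
      + t ^ 8 * aevalAeval t v q + (t ^ 8 * aevalAeval t w r - t ^ 4 * (aevalAeval t w r * w)) := by
    simp only [normalForm_apply, map_mul, aevalAeval_Y]
    linear_combination (-aevalAeval t v q - aevalAeval t w r) * h₁ - aevalAeval t w r * h₃
  rw [hsplit]
  exact add_mem (add_mem (aevalAeval_u_mem _) (pow_mul_mem 8 (aevalAeval_v_mem _)))
    (sub_mem (pow_mul_mem 8 (aevalAeval_w_mem _)) (pow_mul_mem 4 (aevalAeval_mul_w_mem _)))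

theorem aevalAeval_w_mul_v_mem (h₂ : t ^ 4 * (v - w) = v * w) (s : K[X][Y]) :
    aevalAeval t w s * v ∈ N := by
  induction s using Polynomial.induction_on with
  | C a => exact ⟨(0, C a, 0), by simp⟩
  | add p q hp hq => simpa [add_mul] using add_mem hp hq
  | monomial k a ih =>
    have hsplit : aevalAeval t w (C a * Y ^ (k + 1)) * v =
        t ^ 4 * (aevalAeval t w (C a * Y ^ k) * v)
          - t ^ 4 * (aevalAeval t w (C a * Y ^ k) * w) := by
      rw [pow_succ, ← mul_assoc, map_mul, aevalAeval_Y]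
      linear_combination (-aevalAeval t w (C a * Y ^ k)) * h₂
    rw [hsplit]
    exact sub_mem (pow_mul_mem 4 ih) (pow_mul_mem 4 (aevalAeval_mul_w_mem _))

theorem v_mul_mem (h₁ : t ^ 8 = u * v) (h₂ : t ^ 4 * (v - w) = v * w)
    (h₃ : u * (v - w) = t ^ 4 * w) {n : S} (hn : n ∈ N) : v * n ∈ N := by
  obtain ⟨⟨p, q, r⟩, rfl⟩ := hn
  have hsplit : v * normalForm t u v w (p, q, r) = aevalAeval t u p * v
      + aevalAeval t v (Y * q) * v
      + (t ^ 4 * (aevalAeval t w r * v) - t ^ 4 * (aevalAeval t w r * w)) := by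
    simp only [normalForm_apply, map_mul, aevalAeval_Y]
    linear_combination (-aevalAeval t w r) * h₂
  rw [hsplit]
  refine add_mem (add_mem ?_ (aevalAeval_mul_v_mem _)) (sub_mem ?_ ?_)
  · exact aevalAeval_mul_mem (fun n => u_mul_mem h₁ h₃) p v_mem
  · exact pow_mul_mem 4 (aevalAeval_w_mul_v_mem h₂ r)
  · exact pow_mul_mem 4 (aevalAeval_mul_w_mem r)

theorem w_mul_mem (h₁ : t ^ 8 = u * v) (h₂ : t ^ 4 * (v - w) = v * w)
    (h₃ : u * (v - w) = t ^ 4 * w) {n : S} (hn : n ∈ N) : w * n ∈ N := by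
  obtain ⟨⟨p, q, r⟩, rfl⟩ := hn
  have hsplit : w * normalForm t u v w (p, q, r) = aevalAeval t u p * w
      + (t ^ 4 * (aevalAeval t v q * v) - t ^ 4 * (aevalAeval t v q * w))
      + aevalAeval t w (Y * r) * w := by
    simp only [normalForm_apply, map_mul, aevalAeval_Y]
    linear_combination (-aevalAeval t v q) * h₂
  rw [hsplit]
  refine add_mem (add_mem ?_ (sub_mem ?_ ?_)) (aevalAeval_mul_w_mem _)
  · exact aevalAeval_mul_mem (fun n => u_mul_mem h₁ h₃) p w_mem
  · exact pow_mul_mem 4 (aevalAeval_mul_v_mem q)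
  · exact pow_mul_mem 4 (aevalAeval_mul_mem (fun n => v_mul_mem h₁ h₂ h₃) q w_mem)

theorem aeval_mem_range (h₁ : t ^ 8 = u * v) (h₂ : t ^ 4 * (v - w) = v * w)
    (h₃ : u * (v - w) = t ^ 4 * w) (f : MvPolynomial (Fin 4) K) :
    MvPolynomial.aeval ![t, u, v, w] f ∈ N := by
  induction f using MvPolynomial.induction_on with
  | C a => exact ⟨(C (C a), 0, 0), by simp⟩
  | add f g hf hg => simpa using add_mem hf hg
  | mul_X f i ih =>
    rw [map_mul, MvPolynomial.aeval_X, mul_comm]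
    fin_cases i
    · simpa using pow_mul_mem 1 ih
    · exact u_mul_mem h₁ h₃ ih
    · exact v_mul_mem h₁ h₂ h₃ ih
    · exact w_mul_mem h₁ h₂ h₃ ih

end normalForm

end NormalForm

section Independence

open Polynomial

variable {K L : Type*} [CommRing K] [Field L] [Algebra K L]

theorem aevalAeval_inv_mul_pow_natDegree (x : L) {y : L} (hy : y ≠ 0) (p : K[X][Y]) :
    aevalAeval x y⁻¹ p * y ^ p.natDegree = aevalAeval x y p.reverse := by
  let _ := invertibleOfNonzero (inv_ne_zero hy)
  rw [aevalAeval_eq_eval₂, aevalAeval_eq_eval₂, ← eval₂_reverse_mul_pow _ y⁻¹, invOf_eq_inv,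
    inv_inv, mul_assoc, ← mul_pow, inv_mul_cancel₀ hy, one_pow, mul_one]

/-- Clearing the denominators `Y ^ (deg Q + 1) * (Y + 1) ^ (deg R + 1)` of the partial fraction
expression `P(Y) + c·Y⁻¹·Q(Y⁻¹) + c·(Y + 1)⁻¹·R((Y + 1)⁻¹)`. -/
noncomputable def clearDenominators (c : K[X]) (P Q R : K[X][Y]) : K[X][Y] :=
  P * Y ^ (Q.natDegree + 1) * (Y + 1) ^ (R.natDegree + 1)
    + C c * Q.reverse * (Y + 1) ^ (R.natDegree + 1)
    + C c * R.reverse.comp (Y + 1) * Y ^ (Q.natDegree + 1)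

theorem aevalAeval_clearDenominators (t : L) {x : L} (hx : x ≠ 0) (hx1 : x + 1 ≠ 0) (c : K[X])
    (P Q R : K[X][Y]) :
    aevalAeval t x (clearDenominators c P Q R) =
      (aevalAeval t x P + aevalAeval t x⁻¹ Q * (aeval t c * x⁻¹)
        + aevalAeval t (x + 1)⁻¹ R * (aeval t c * (x + 1)⁻¹))
        * (x ^ (Q.natDegree + 1) * (x + 1) ^ (R.natDegree + 1)) := by
  have hQ := aevalAeval_inv_mul_pow_natDegree t hx Q
  have hR := aevalAeval_inv_mul_pow_natDegree t hx1 R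
  rw [clearDenominators]
  simp only [map_add, map_mul, map_pow, map_one, aevalAeval_C, aevalAeval_Y, aevalAeval_comp, ← hQ,
    ← hR]
  field_simp
  ring

theorem eq_zero_of_clearDenominators_eq_zero [IsDomain K] {c : K[X]} (hc : c ≠ 0)
    {P Q R : K[X][Y]} (h : clearDenominators c P Q R = 0) : P = 0 ∧ Q = 0 ∧ R = 0 := by
  rw [clearDenominators] at h
  have hQ : Q = 0 := by simpa [← coeff_zero_eq_eval_zero, hc] using congrArg (eval 0) h
  have hR : R = 0 := by simpa [← coeff_zero_eq_eval_zero, hc] using congrArg (eval (-1)) h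
  subst hQ hR
  have hY : (Y + 1 : K[X][Y]) ≠ 0 := X_add_C_ne_zero 1
  simpa [hY] using h

theorem add_algebraMap_ne_zero [Nontrivial K] {t x : L}
    (hinj : Function.Injective (aevalAeval (R := K) t x)) (a : K) : x + algebraMap K L a ≠ 0 := by
  simpa using hinj.ne (X_add_C_ne_zero (C a) : (Y + C (C a) : K[X][Y]) ≠ 0)

theorem normalForm_injective [IsDomain K] {t x : L}
    (hinj : Function.Injective (aevalAeval (R := K) t x)) :
    Function.Injective (normalForm (K := K) t (t ^ 4 * x) (t ^ 4 * x⁻¹) (t ^ 4 * (x + 1)⁻¹)) := by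
  have hx : x ≠ 0 := by simpa using add_algebraMap_ne_zero hinj 0
  have hx1 : x + 1 ≠ 0 := by simpa using add_algebraMap_ne_zero hinj 1
  rw [injective_iff_map_eq_zero]
  rintro ⟨p, q, r⟩ h
  have hscale (y : L) (s : K[X][Y]) :
      aevalAeval t y (s.comp (C (X ^ 4) * Y)) = aevalAeval t (t ^ 4 * y) s := by
    rw [aevalAeval_comp, map_mul, aevalAeval_C, aeval_X_pow, aevalAeval_Y]
  have hcleared : clearDenominators (X ^ 4)
      (p.comp (C (X ^ 4) * Y)) (q.comp (C (X ^ 4) * Y)) (r.comp (C (X ^ 4) * Y)) = 0 := by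
    apply hinj
    rw [aevalAeval_clearDenominators t hx hx1, hscale, hscale, hscale, aeval_X_pow, map_zero,
      ← normalForm_apply, h, zero_mul]
  have hX4 : (X ^ 4 : K[X]) ∈ nonZeroDivisors K[X] :=
    mem_nonZeroDivisors_of_ne_zero (pow_ne_zero 4 X_ne_zero)
  obtain ⟨hp, hq, hr⟩ := eq_zero_of_clearDenominators_eq_zero (pow_ne_zero 4 X_ne_zero) hcleared
  rw [comp_C_mul_X_eq_zero_iff hX4] at hp hq hr
  simp [hp, hq, hr]

end Independence

section Kernel

open MvPolynomial

variable (K : Type*) [CommRing K]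

noncomputable def presentationIdeal : Ideal (MvPolynomial (Fin 4) K) :=
  Ideal.span {X 0 ^ 8 - X 1 * X 2, X 0 ^ 4 * (X 2 - X 3) - X 2 * X 3,
    X 1 * (X 2 - X 3) - X 0 ^ 4 * X 3}

variable {K}

theorem exists_sub_normalForm_mem (f : MvPolynomial (Fin 4) K) :
    ∃ z, f - normalForm (K := K) (X 0) (X 1) (X 2) (X 3) z ∈ presentationIdeal K := by
  set π := Ideal.Quotient.mkₐ K (presentationIdeal K)
  have hrel : ∀ a b, a - b ∈ presentationIdeal K → π a = π b := fun a b h =>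
    (Ideal.Quotient.mk_eq_mk_iff_sub_mem a b).mpr h
  have hπ : aeval ![π (X 0), π (X 1), π (X 2), π (X 3)] f = π f := by
    conv_rhs => rw [aeval_unique π]
    congr 2
    funext i
    fin_cases i <;> rfl
  obtain ⟨z, hz⟩ := normalForm.aeval_mem_range (t := π (X 0)) (u := π (X 1)) (v := π (X 2))
    (w := π (X 3))
    (by rw [← map_pow, ← map_mul]; exact hrel _ _ (Ideal.subset_span (by simp)))
    (by rw [← map_pow, ← map_sub, ← map_mul, ← map_mul]
        exact hrel _ _ (Ideal.subset_span (by simp)))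
    (by rw [← map_pow, ← map_sub, ← map_mul, ← map_mul]
        exact hrel _ _ (Ideal.subset_span (by simp)))
    f
  refine ⟨z, Ideal.Quotient.eq_zero_iff_mem.mp ?_⟩
  rw [← Ideal.Quotient.mkₐ_eq_mk K, map_sub, map_normalForm, hz, hπ, sub_self]

theorem ker_aeval_eq_presentationIdeal [IsDomain K] {L : Type*} [Field L] [Algebra K L]
    {t x : L} (hinj : Function.Injective (Polynomial.aevalAeval (R := K) t x)) :
    RingHom.ker (aeval (R := K) ![t, t ^ 4 * x, t ^ 4 * x⁻¹, t ^ 4 * (x + 1)⁻¹]) =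
      presentationIdeal K := by
  set φ := aeval (R := K) ![t, t ^ 4 * x, t ^ 4 * x⁻¹, t ^ 4 * (x + 1)⁻¹]
  have hx : x ≠ 0 := by simpa using add_algebraMap_ne_zero hinj 0
  have hx1 : x + 1 ≠ 0 := by simpa using add_algebraMap_ne_zero hinj 1
  have hle : presentationIdeal K ≤ RingHom.ker φ := by
    rw [presentationIdeal, Ideal.span_le]
    rintro g (rfl | rfl | rfl) <;> simp [φ] <;> field_simp <;> ring
  refine le_antisymm (fun f hf => ?_) hle
  obtain ⟨z, hz⟩ := exists_sub_normalForm_mem f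
  suffices z = 0 by simpa [this] using hz
  apply normalForm_injective hinj
  have hφz := hle hz
  rw [RingHom.mem_ker, map_sub, RingHom.mem_ker.mp hf, zero_sub, neg_eq_zero] at hφz
  rw [map_zero, ← hφz, map_normalForm]
  simp [φ]

theorem injective_aevalAeval_of_injective {L : Type*} [CommRing L] [Algebra K L]
    (f : MvPolynomial (Fin 2) K →ₐ[K] L) (hf : Function.Injective f) :
    Function.Injective (Polynomial.aevalAeval (R := K) (f (X 0)) (f (X 1))) := by
  have h : Polynomial.aevalAeval (f (X 0)) (f (X 1)) =
      f.comp (Polynomial.Bivariate.equivMvPolynomial K).toAlgHom := by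
    ext <;> simp
  rw [h, AlgHom.coe_comp]
  exact hf.comp (Polynomial.Bivariate.equivMvPolynomial K).injective

end Kernel

end Presentation

open MvPolynomial

/-- Let `R = K[T,U,V,W]/(T⁸-UV, T⁴(V-W)-VW, U(V-W)-T⁴W)` over a
field `K`.  Then `R` is isomorphic to the subring `K[t, t⁴x, t⁴x⁻¹, t⁴(x+1)⁻¹]`
of `K(t,x)` via `t ↦ t, u ↦ t⁴x, v ↦ t⁴x⁻¹, w ↦ t⁴(x+1)⁻¹`: the kernel of the
substitution map `K[T,U,V,W] → K(t,x)` is exactly the ideal of relations, and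
its range is exactly the subalgebra `K[t, t⁴x, t⁴x⁻¹, t⁴(x+1)⁻¹]`. -/
theorem presentation_of_subring (K : Type) [Field K]
    (t x : FractionRing (MvPolynomial (Fin 2) K))
    (ht : t = algebraMap (MvPolynomial (Fin 2) K) _ (X 0))
    (hx : x = algebraMap (MvPolynomial (Fin 2) K) _ (X 1))
    (T U V W : MvPolynomial (Fin 4) K)
    (hT : T = X 0) (hU : U = X 1) (hV : V = X 2) (hW : W = X 3)
    (φ : MvPolynomial (Fin 4) K →ₐ[K] FractionRing (MvPolynomial (Fin 2) K))
    (hφ : φ = aeval ![t, t ^ 4 * x, t ^ 4 * x⁻¹, t ^ 4 * (x + 1)⁻¹]) :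
    RingHom.ker φ =
      Ideal.span {T ^ 8 - U * V, T ^ 4 * (V - W) - V * W,
        U * (V - W) - T ^ 4 * W} ∧
    φ.range =
      Algebra.adjoin K {t, t ^ 4 * x, t ^ 4 * x⁻¹, t ^ 4 * (x + 1)⁻¹} := by
  subst hT hU hV hW hφ ht hx
  refine ⟨Presentation.ker_aeval_eq_presentationIdeal
    (Presentation.injective_aevalAeval_of_injective (IsScalarTower.toAlgHom K _ _)
      (IsFractionRing.injective (MvPolynomial (Fin 2) K) _)), ?_⟩
  rw [← Algebra.adjoin_range_eq_range_aeval]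
  congr 1
  ext y
  simp
  tauto
end

section
/- In $S = K[T,Y,Z]/(T^4 + YZ^2 - Y^2Z)$ over a field $K$, the elements $yz^2$, $y^3 + yz^2 - 2y^2z$, $z^3 + y^2z - 2yz^2$, $t$ satisfy the defining relations of $R = K[T,U,V,W]/(T^8-UV,\ T^4(V-W)-VW,\ U(V-W)-T^4W)$; that is, the assignment $u \mapsto yz^2$, $v \mapsto y^3+yz^2-2y^2z$, $w \mapsto z^3+y^2z-2yz^2$, $t \mapsto t$ defines a $K$-algebra homomorphism $R \to S$. -/
open MvPolynomial

/-- In `S = K[T,Y,Z]/(T⁴ + YZ² - Y²Z)` over a field `K`, the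
elements `yz²`, `y³+yz²-2y²z`, `z³+y²z-2yz²`, `t` satisfy the defining
relations of `R = K[T,U,V,W]/(T⁸-UV, T⁴(V-W)-VW, U(V-W)-T⁴W)`; i.e. the
substitution `t ↦ t, u ↦ yz², v ↦ y³+yz²-2y²z, w ↦ z³+y²z-2yz²` maps each of
`T⁸-UV`, `T⁴(V-W)-VW`, `U(V-W)-T⁴W` into the ideal `(T⁴+YZ²-Y²Z)` of
`K[T,Y,Z]`, hence defines a `K`-algebra homomorphism `R → S`. -/
theorem substitution_defines_hom (K : Type) [Field K]
    (T U V W : MvPolynomial (Fin 4) K)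
    (hT : T = X 0) (hU : U = X 1) (hV : V = X 2) (hW : W = X 3)
    (t y z : MvPolynomial (Fin 3) K)
    (ht : t = X 0) (hy : y = X 1) (hz : z = X 2)
    (ψ : MvPolynomial (Fin 4) K →ₐ[K] MvPolynomial (Fin 3) K)
    (hψ : ψ = aeval
      ![t, y * z ^ 2, y ^ 3 + y * z ^ 2 - 2 * y ^ 2 * z,
        z ^ 3 + y ^ 2 * z - 2 * y * z ^ 2]) :
    ∀ f ∈ ({T ^ 8 - U * V, T ^ 4 * (V - W) - V * W,
        U * (V - W) - T ^ 4 * W} : Set (MvPolynomial (Fin 4) K)),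
      ψ f ∈ Ideal.span {t ^ 4 + y * z ^ 2 - y ^ 2 * z} := by
  subst hT hU hV hW hψ
  rintro f (rfl | rfl | rfl) <;>
    rw [Ideal.mem_span_singleton] <;>
    simp only [map_sub, map_mul, map_pow, aeval_X, Matrix.cons_val_zero,
      Matrix.cons_val_one, Matrix.head_cons, Matrix.cons_val_two,
      Matrix.tail_cons, Matrix.cons_val_three]
  · exact ⟨t ^ 4 + y ^ 2 * z - y * z ^ 2, by ring⟩
  · exact ⟨(y - z) ^ 3, by ring⟩
  · exact ⟨-(z * (y - z) ^ 2), by ring⟩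
end

section
/- Let $S$ be a ring of prime characteristic $p$ and $R \subseteq S$ a subring that is a direct summand of $S$ as an $R$-module (via a retraction $\phi: S \to R$). If every ideal of $S$ equals its Frobenius closure, then every ideal of $R$ equals its Frobenius closure; that is, for an ideal $I \subseteq R$ and $x \in R$ with $x^q \in I^{[q]}$ for some $q = p^e$, one has $x \in I$. -/
lemma bracketPower_map_le {R S : Type} [CommRing R] [CommRing S] (f : R →+* S)
    (I : Ideal R) (q : ℕ) :
    Ideal.map f (bracketPower I q) ≤ bracketPower (Ideal.map f I) q := by
  rw [bracketPower, Ideal.map_span]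
  apply Ideal.span_mono
  rintro _ ⟨_, ⟨a, ha, rfl⟩, rfl⟩
  exact ⟨f a, Ideal.mem_map_of_mem f ha, (map_pow f a q).symm⟩

/-- Let `S` be a ring of prime characteristic `p` and `R ⊆ S` a
subring that is a direct summand of `S` as an `R`-module, via a retraction
`φ : S → R` (an `R`-linear map with `φ|_R = id`).  If every ideal of `S`
equals its Frobenius closure, then every ideal of `R` equals its Frobenius
closure: for an ideal `I ⊆ R` and `x ∈ R` with `x^q ∈ I^{[q]}` for some
`q = pᵉ`, one has `x ∈ I`. -/
theorem frobeniusClosed_of_direct_summand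
    (R S : Type) [CommRing R] [CommRing S] [Algebra R S]
    (hinj : Function.Injective (algebraMap R S))
    (p : ℕ) [Fact p.Prime] [CharP S p]
    (φ : S →ₗ[R] R) (hφ : ∀ r : R, φ (algebraMap R S r) = r)
    (hS : ∀ (J : Ideal S) (s : S),
      (∃ e : ℕ, s ^ p ^ e ∈ bracketPower J (p ^ e)) → s ∈ J) :
    ∀ (I : Ideal R) (x : R),
      (∃ e : ℕ, x ^ p ^ e ∈ bracketPower I (p ^ e)) → x ∈ I := by
  rintro I x ⟨e, hx⟩
  set f := algebraMap R S
  -- x maps into IS, and x^q ∈ (IS)^{[q]}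
  have hxS : f x ∈ Ideal.map f I := by
    apply hS (Ideal.map f I) (f x)
    refine ⟨e, ?_⟩
    have := bracketPower_map_le f I (p ^ e) (Ideal.mem_map_of_mem f hx)
    rwa [map_pow] at this
  -- φ pulls IS back into I
  have key : ∀ s ∈ Ideal.map f I, ∀ t : S, φ (t * s) ∈ I := by
    intro s hs
    rw [Ideal.map, Ideal.span] at hs
    refine Submodule.span_induction ?_ ?_ ?_ ?_ hs
    · rintro _ ⟨a, ha, rfl⟩ t
      have : t * f a = a • t := by
        rw [Algebra.smul_def]; ring
      rw [this, map_smul]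
      exact I.mul_mem_right _ ha
    · intro t; simp
    · intro y z _ _ hy hz t
      have : t * (y + z) = t * y + t * z := by ring
      rw [this, map_add]
      exact I.add_mem (hy t) (hz t)
    · intro a y _ hy t
      have : t * (a • y) = (a • t) * y := by
        rw [smul_eq_mul, smul_eq_mul]; ring
      rw [this]
      exact hy _
  have := key (f x) hxS 1
  rwa [one_mul, hφ] at this
end
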